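/- Let φ = c₁ ∧ … ∧ c_k be a 3CNF formula over variables x₁,…,x_n in which each variable occurs at most once in each clause. Over the alphabet {a_{ij} | 1 ≤ i ≤ k, 1 ≤ j ≤ n, clause c_i uses x_j or ¬x_j}, define E_φ = X₁ || … || X_n where X_j = ((a_{t₁j} || … || a_{t_l j}) | (a_{f₁j} || … || a_{f_m j})) with c_{t₁},…,c_{t_l} the clauses using the literal x_j and c_{f₁},…,c_{f_m} the clauses using ¬x_j; and define E'_φ = (C₁ | … | C_k)^{[0,k−1]} where C_i = (a_{ij₁} | … | a_{ij_p})⁺ with x_{j₁},…,x_{j_p} the variables used by clause c_i. Then φ is satisfiable if and only if L(E_φ) is not contained in L(E'_φ). Note that no symbol is repeated in E_φ or in E'_φ. -/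

import Mathlib

set_option autoImplicit false

universe u v w

/-- An unordered word over an alphabet `σ`: a multiset over `σ`,
viewed as a function giving the number of occurrences of each symbol. -/
def UWord (σ : Type u) : Type u := σ → ℕ

/-- The empty unordered word `ε`. -/
def UWord.zero {σ : Type u} : UWord σ := fun _ => 0

/-- Unordered concatenation (multiset union) of two unordered words. -/
def UWord.add {σ : Type u} (w₁ w₂ : UWord σ) : UWord σ := fun a => w₁ a + w₂ a

/-- The unordered word consisting of a single occurrence of `a`. -/
def UWord.single {σ : Type u} [DecidableEq σ] (a : σ) : UWord σ :=
  fun b => if b = a then 1 else 0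

/-- Unordered concatenation of a list of unordered words. -/
def listSum {σ : Type u} (l : List (UWord σ)) : UWord σ := l.foldr UWord.add UWord.zero

/-- Unordered regular expressions (UREs):
`E ::= ε | a | E* | (E|E) | (E||E)`. -/
inductive URE (σ : Type u) : Type u where
  | eps : URE σ
  | sym : σ → URE σ
  | star : URE σ → URE σ
  | alt : URE σ → URE σ → URE σ
  | conc : URE σ → URE σ → URE σ

/-- The language of unordered words defined by a URE. -/
def URE.lang {σ : Type u} [DecidableEq σ] : URE σ → Set (UWord σ)
  | .eps => {UWord.zero}
  | .sym a => {UWord.single a}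
  | .star E => {w | ∃ l : List (UWord σ), (∀ x ∈ l, x ∈ URE.lang E) ∧ w = listSum l}
  | .alt E₁ E₂ => URE.lang E₁ ∪ URE.lang E₂
  | .conc E₁ E₂ => {w | ∃ w₁ ∈ URE.lang E₁, ∃ w₂ ∈ URE.lang E₂, w = w₁.add w₂}

/-- The macro `E? = E | ε`. -/
def URE.opt {σ : Type u} (E : URE σ) : URE σ := URE.alt E URE.eps

/-- The macro `E⁺ = E || E*`. -/
def URE.plus {σ : Type u} (E : URE σ) : URE σ := URE.conc E (URE.star E)

/-- Unordered concatenation `E₁ || ⋯ || E_k` of a list of UREs. -/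
def URE.concList {σ : Type u} (l : List (URE σ)) : URE σ := l.foldr URE.conc URE.eps

/-- Disjunction `E₁ | ⋯ | E_k` of a (nonempty) list of UREs. -/
def URE.altList {σ : Type u} : List (URE σ) → URE σ
  | [] => URE.eps
  | [E] => E
  | E :: F :: rest => URE.alt E (URE.altList (F :: rest))

/-- The language of the interval multiplicity `E^[lo,hi]` (finite bounds):
unordered concatenations of between `lo` and `hi` words of `L(E)`. -/
def URE.langIter {σ : Type u} [DecidableEq σ] (E : URE σ) (lo hi : ℕ) : Set (UWord σ) :=
  {w | ∃ l : List (UWord σ),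
      (∀ x ∈ l, x ∈ URE.lang E) ∧ lo ≤ l.length ∧ l.length ≤ hi ∧ w = listSum l}

/- The alphabet `{a_{ij}}`: the pair `(i, j) : Fin k × Fin n` is the symbol `a_{ij}`.
The 3CNF formula `φ = c₁ ∧ … ∧ c_k` over variables `x₁,…,x_n` is given by its sets of
literals `lits i` (a literal is a variable together with a sign). -/

/-- The URE `a_{ij}`. -/
def asym (k n : ℕ) (i : Fin k) (j : Fin n) : URE (Fin k × Fin n) := URE.sym (i, j)

/-- The clause `c_i` uses the variable `x_j` (positively or negatively). -/
def usesVar {k n : ℕ} (lits : Fin k → Finset (Fin n × Bool)) (i : Fin k) (j : Fin n) :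
    Prop :=
  (j, true) ∈ lits i ∨ (j, false) ∈ lits i

/-- `X_j = ((a_{t₁j} || … || a_{t_l j}) | (a_{f₁j} || … || a_{f_m j}))` where
`c_{t₁},…,c_{t_l}` are the clauses using the literal `x_j` and `c_{f₁},…,c_{f_m}`
the clauses using `¬x_j`. -/
def X10 {k n : ℕ} (lits : Fin k → Finset (Fin n × Bool)) (j : Fin n) :
    URE (Fin k × Fin n) :=
  URE.alt
    (URE.concList (((List.finRange k).filter (fun i => (j, true) ∈ lits i)).map
      (fun i => asym k n i j)))
    (URE.concList (((List.finRange k).filter (fun i => (j, false) ∈ lits i)).map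
      (fun i => asym k n i j)))

/-- `E_φ = X₁ || … || X_n`. -/
def E10 {k n : ℕ} (lits : Fin k → Finset (Fin n × Bool)) : URE (Fin k × Fin n) :=
  URE.concList ((List.finRange n).map (X10 lits))

/-- `C_i = (a_{ij₁} | … | a_{ij_p})⁺` where `x_{j₁},…,x_{j_p}` are the variables used
by the clause `c_i`. -/
def C10 {k n : ℕ} (lits : Fin k → Finset (Fin n × Bool)) (i : Fin k) :
    URE (Fin k × Fin n) :=
  URE.plus (URE.altList
    (((List.finRange n).filter (fun j => (j, true) ∈ lits i ∨ (j, false) ∈ lits i)).map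
      (fun j => asym k n i j)))

/-- `L(E'_φ)` where `E'_φ = (C₁ | … | C_k)^[0,k−1]`. -/
def E10'lang {k n : ℕ} (lits : Fin k → Finset (Fin n × Bool)) :
    Set (UWord (Fin k × Fin n)) :=
  URE.langIter (URE.altList ((List.finRange k).map (C10 lits))) 0 (k - 1)

/-!
`L(E_φ)` consists of one word `w_v` per assignment `v`: `w_v` contains `a_{ij}` exactly when
the literal of `x_j` made true by `v` occurs in `c_i`, so row `i` of `w_v` is empty exactly
when `v` falsifies `c_i`. A word of `L(C_i)` is a nonempty word inside row `i`, hence a word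
of `L(E'_φ)` meets at most `k - 1` rows and leaves some row empty; conversely, a word over
the symbols of `E'_φ` with an empty row splits into its at most `k - 1` nonempty rows and
lies in `L(E'_φ)`.
-/

namespace UWord

variable {σ : Type u}

lemma listSum_apply (l : List (UWord σ)) (a : σ) :
    listSum l a = (l.map fun w => w a).sum := by
  induction l with
  | nil => rfl
  | cons x l ih => simp [listSum, UWord.add, ← ih]

lemma listSum_apply_ne_zero {l : List (UWord σ)} {a : σ} :
    listSum l a ≠ 0 ↔ ∃ x ∈ l, x a ≠ 0 := by
  simp [listSum_apply, List.sum_eq_zero_iff]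

lemma listSum_map_single_apply [DecidableEq σ] (as : List σ) (a : σ) :
    listSum (as.map single) a = as.count a := by
  induction as with
  | nil => rfl
  | cons b as ih =>
    show single b a + listSum (as.map single) a = _
    rw [ih, List.count_cons, add_comm]
    by_cases h : b = a <;> simp [single, h, Ne.symm]

lemma exists_eq_listSum_map_single [DecidableEq σ] [Fintype σ] (w : UWord σ) :
    ∃ as : List σ, (∀ a ∈ as, w a ≠ 0) ∧ w = listSum (as.map single) := by
  refine ⟨Finset.univ.toList.flatMap fun a => List.replicate (w a) a, ?_, ?_⟩
  · simp +contextual [List.mem_replicate]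
  · funext a
    rw [listSum_map_single_apply, List.count_flatMap]
    simp only [Function.comp_def, List.count_replicate, Finset.sum_map_toList, beq_iff_eq]
    exact ((Finset.sum_ite_eq' _ _ _).trans (if_pos (Finset.mem_univ a))).symm

end UWord

namespace URE

open UWord

variable {σ : Type u} [DecidableEq σ]

lemma mem_lang_altList {l : List (URE σ)} (hl : l ≠ []) {w : UWord σ} :
    w ∈ (altList l).lang ↔ ∃ E ∈ l, w ∈ E.lang := by
  induction l with
  | nil => exact absurd rfl hl
  | cons F l ih =>
    cases l with
    | nil => simp [altList]
    | cons G l =>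
      simp only [altList] at ih ⊢
      simp [lang, ih]

lemma mem_of_mem_lang_altList_map_sym {as : List σ} {u : UWord σ}
    (hu : u ∈ (altList (as.map sym)).lang) {a : σ} (ha : u a ≠ 0) : a ∈ as := by
  rcases eq_or_ne as [] with rfl | has
  · exact absurd (congrFun (hu : u = UWord.zero) a) ha
  · obtain ⟨_, hE, hu⟩ := (mem_lang_altList (by simpa using has)).1 hu
    obtain ⟨c, hc, rfl⟩ := List.mem_map.1 hE
    obtain rfl : u = single c := hu
    by_cases hac : a = c
    · exact hac ▸ hc
    · simp [single, hac] at ha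

lemma single_mem_lang_altList_map_sym {as : List σ} {a : σ} (ha : a ∈ as) :
    single a ∈ (altList (as.map sym)).lang :=
  (mem_lang_altList (by simpa using List.ne_nil_of_mem ha)).2
    ⟨sym a, List.mem_map_of_mem ha, rfl⟩

lemma lang_concList_map_sym (as : List σ) :
    (concList (as.map sym)).lang = {listSum (as.map single)} := by
  induction as with
  | nil => rfl
  | cons a as ih =>
    ext w
    simp only [List.map_cons, concList, List.foldr_cons] at ih ⊢
    simp [lang, ih, listSum]

lemma mem_lang_concList_map_iff {α : Type v} {l : List α} (hl : l.Nodup)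
    (f : α → URE σ) {w : UWord σ} :
    w ∈ (concList (l.map f)).lang ↔
      ∃ g : α → UWord σ, (∀ x ∈ l, g x ∈ (f x).lang) ∧ w = listSum (l.map g) := by
  classical
  induction l generalizing w with
  | nil => exact ⟨fun hw => ⟨fun _ => UWord.zero, by simp, hw⟩, fun ⟨_, _, hw⟩ => hw⟩
  | cons x l ih =>
    obtain ⟨hx, hl⟩ := List.nodup_cons.1 hl
    constructor
    · rintro ⟨u, hu, w', hw', rfl⟩
      obtain ⟨g, hg, rfl⟩ := (ih hl).1 hw'
      have hupd : ∀ y ∈ l, Function.update g x u y = g y := fun y hy =>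
        Function.update_of_ne (ne_of_mem_of_not_mem hy hx) _ _
      refine ⟨Function.update g x u, ?_, ?_⟩
      · simp only [List.forall_mem_cons, Function.update_self]
        exact ⟨hu, fun y hy => hupd y hy ▸ hg y hy⟩
      · simp only [List.map_cons, listSum, List.foldr_cons, Function.update_self]
        rw [List.map_congr_left hupd]
    · rintro ⟨g, hg, rfl⟩
      have hg' : ∀ y ∈ l, g y ∈ (f y).lang := fun y hy => hg y (List.mem_cons_of_mem _ hy)
      exact ⟨g x, hg x List.mem_cons_self, _, (ih hl).2 ⟨g, hg', rfl⟩, rfl⟩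

lemma mem_lang_plus_of_single_mem [Fintype σ] {E : URE σ} {w : UWord σ} (hw : ∃ a, w a ≠ 0)
    (hE : ∀ a, w a ≠ 0 → single a ∈ E.lang) : w ∈ E.plus.lang := by
  obtain ⟨as, has, rfl⟩ := exists_eq_listSum_map_single w
  rcases as with _ | ⟨a, as⟩
  · simp [listSum, UWord.zero] at hw
  · refine ⟨single a, hE a (has a List.mem_cons_self), _, ⟨as.map single, ?_, rfl⟩, rfl⟩
    simpa using fun b hb => hE b (has b (List.mem_cons_of_mem _ hb))

lemma mem_of_mem_lang_plus {E : URE σ} {P : σ → Prop} (hE : ∀ u ∈ E.lang, ∀ a, u a ≠ 0 → P a)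
    {w : UWord σ} (hw : w ∈ E.plus.lang) {a : σ} (ha : w a ≠ 0) : P a := by
  obtain ⟨u, hu, _, ⟨l, hl, rfl⟩, rfl⟩ := hw
  by_cases hua : u a = 0
  · obtain ⟨x, hx, hxa⟩ := listSum_apply_ne_zero.1 (by simpa [UWord.add, hua] using ha)
    exact hE x (hl x hx) a hxa
  · exact hE u hu a hua

end URE

section Reduction

open UWord URE

variable {k n : ℕ} (lits : Fin k → Finset (Fin n × Bool))

def branchWord (j : Fin n) (b : Bool) : UWord (Fin k × Fin n) :=
  fun p => if p.2 = j ∧ (j, b) ∈ lits p.1 then 1 else 0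

def assignmentWord (v : Fin n → Bool) : UWord (Fin k × Fin n) :=
  fun p => if (p.2, v p.2) ∈ lits p.1 then 1 else 0

lemma lang_branch (j : Fin n) (b : Bool) :
    (concList (((List.finRange k).filter fun i => (j, b) ∈ lits i).map
      fun i => asym k n i j)).lang = {branchWord lits j b} := by
  have hnd : (((List.finRange k).filter fun i => (j, b) ∈ lits i).map
      fun i => ((i, j) : Fin k × Fin n)).Nodup :=
    ((List.nodup_finRange k).filter _).map fun _ _ h => (Prod.mk.inj h).1
  have hsym : (((List.finRange k).filter fun i => (j, b) ∈ lits i).map fun i => asym k n i j) =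
      (((List.finRange k).filter fun i => (j, b) ∈ lits i).map fun i => (i, j)).map sym := by
    rw [List.map_map]; rfl
  rw [hsym, lang_concList_map_sym]
  congr 1
  funext ⟨i, j'⟩
  -- `List.count` here uses the `BEq` instance derived from `DecidableEq`, not `instBEqProd`
  rw [listSum_map_single_apply, @List.Nodup.count _ instBEqOfDecidableEq _ _ _ hnd]
  by_cases hj : j' = j
  · subst hj; simp [branchWord]
  · simp [branchWord, hj, Ne.symm hj]

lemma mem_lang_X10 {j : Fin n} {u : UWord (Fin k × Fin n)} :
    u ∈ (X10 lits j).lang ↔ ∃ b, u = branchWord lits j b := by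
  simp [X10, lang, lang_branch]

lemma listSum_branchWord (v : Fin n → Bool) :
    listSum ((List.finRange n).map fun j => branchWord lits j (v j)) = assignmentWord lits v := by
  funext p
  rw [listSum_apply, List.map_map, ← Fin.sum_univ_def]
  simp [branchWord, assignmentWord, ite_and]

lemma lang_E10 : (E10 lits).lang = Set.range (assignmentWord lits) := by
  ext w
  rw [E10, mem_lang_concList_map_iff (List.nodup_finRange n)]
  simp only [mem_lang_X10, List.mem_finRange, true_implies, Set.mem_range]
  constructor
  · rintro ⟨g, hg, rfl⟩
    choose v hv using hg
    obtain rfl : g = fun j => branchWord lits j (v j) := funext hv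
    exact ⟨v, (listSum_branchWord lits v).symm⟩
  · rintro ⟨v, rfl⟩
    exact ⟨_, fun j => ⟨v j, rfl⟩, (listSum_branchWord lits v).symm⟩

lemma assignmentWord_row_eq_zero_iff (v : Fin n → Bool) (i : Fin k) :
    (∀ j, assignmentWord lits v (i, j) = 0) ↔ ∀ ℓ ∈ lits i, v ℓ.1 ≠ ℓ.2 := by
  simp only [assignmentWord, ite_eq_right_iff, one_ne_zero, imp_false]
  exact ⟨fun h ℓ hℓ hv => h ℓ.1 (hv ▸ hℓ), fun h j hj => h _ hj rfl⟩

lemma usesVar_of_assignmentWord_ne_zero {v : Fin n → Bool} {p : Fin k × Fin n}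
    (h : assignmentWord lits v p ≠ 0) : usesVar lits p.1 p.2 := by
  by_contra hp
  refine h (if_neg fun hv => hp ?_)
  cases hb : v p.2 <;> simp_all [usesVar]

lemma C10_eq_plus_altList (i : Fin k) :
    C10 lits i = plus (altList ((((List.finRange n).filter
      fun j => (j, true) ∈ lits i ∨ (j, false) ∈ lits i).map fun j => (i, j)).map sym)) := by
  rw [C10, List.map_map]; rfl

lemma row_eq_of_mem_lang_C10 {i : Fin k} {x : UWord (Fin k × Fin n)} (hx : x ∈ (C10 lits i).lang)
    {p : Fin k × Fin n} (hp : x p ≠ 0) : p.1 = i := by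
  rw [C10_eq_plus_altList] at hx
  refine mem_of_mem_lang_plus (P := fun p => p.1 = i) (fun u hu a ha => ?_) hx hp
  obtain ⟨j, -, rfl⟩ := List.mem_map.1 (mem_of_mem_lang_altList_map_sym hu ha)
  rfl

lemma mem_lang_C10 {i : Fin k} {x : UWord (Fin k × Fin n)} (hx : ∃ p, x p ≠ 0)
    (hsupp : ∀ p, x p ≠ 0 → p.1 = i ∧ usesVar lits i p.2) : x ∈ (C10 lits i).lang := by
  rw [C10_eq_plus_altList]
  refine mem_lang_plus_of_single_mem hx fun p hp => single_mem_lang_altList_map_sym ?_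
  obtain ⟨rfl, hp⟩ := hsupp p hp
  exact List.mem_map.2 ⟨p.2, by simpa [usesVar] using hp, rfl⟩

lemma exists_row_eq_zero_of_mem_E10'lang (hk : 0 < k) {w : UWord (Fin k × Fin n)}
    (hw : w ∈ E10'lang lits) : ∃ i, ∀ j, w (i, j) = 0 := by
  obtain ⟨l, hl, -, hlen, rfl⟩ := hw
  have hrow : ∀ x ∈ l, ∃ i, ∀ p, x p ≠ 0 → p.1 = i := by
    intro x hx
    obtain ⟨_, hE, hxE⟩ := (mem_lang_altList (by simp; omega)).1 (hl x hx)
    obtain ⟨i, -, rfl⟩ := List.mem_map.1 hE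
    exact ⟨i, fun p => row_eq_of_mem_lang_C10 lits hxE⟩
  have : Nonempty (Fin k) := ⟨⟨0, hk⟩⟩
  choose! row hrow using hrow
  -- the nonzero rows of `w` are among the at most `k - 1` rows of the summands
  have hcard : (l.map row).toFinset.card < (Finset.univ : Finset (Fin k)).card := by
    calc _ ≤ (l.map row).length := List.toFinset_card_le _
      _ < k := by rw [List.length_map]; omega
      _ = _ := (Finset.card_fin k).symm
  obtain ⟨i, -, hi⟩ := Finset.exists_mem_notMem_of_card_lt_card hcard
  refine ⟨i, fun j => by_contra fun hij => hi ?_⟩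
  obtain ⟨x, hx, hxij⟩ := listSum_apply_ne_zero.1 hij
  exact List.mem_toFinset.2 (List.mem_map.2 ⟨x, hx, (hrow x hx _ hxij).symm⟩)

lemma mem_E10'lang_of_row_eq_zero {w : UWord (Fin k × Fin n)}
    (hw : ∀ p, w p ≠ 0 → usesVar lits p.1 p.2) {i₀ : Fin k} (h₀ : ∀ j, w (i₀, j) = 0) :
    w ∈ E10'lang lits := by
  let rowPart (i : Fin k) : UWord (Fin k × Fin n) := fun p => if p.1 = i then w p else 0
  let R := Finset.univ.filter fun i => ∃ j, w (i, j) ≠ 0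
  refine ⟨R.toList.map rowPart, ?_, Nat.zero_le _, ?_, ?_⟩
  · simp only [List.mem_map, Finset.mem_toList, forall_exists_index, and_imp]
    rintro _ i hi rfl
    have hCi := List.mem_map_of_mem (f := C10 lits) (List.mem_finRange i)
    refine (mem_lang_altList (List.ne_nil_of_mem hCi)).2 ⟨_, hCi, mem_lang_C10 lits ?_ ?_⟩
    · obtain ⟨j, hj⟩ := (Finset.mem_filter.1 hi).2
      exact ⟨(i, j), by simpa [rowPart] using hj⟩
    · rintro ⟨i', j⟩ hp
      obtain ⟨rfl, hij⟩ : i' = i ∧ w (i', j) ≠ 0 := by simpa [rowPart] using hp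
      exact ⟨rfl, hw _ hij⟩
  · have hR : R ⊆ Finset.univ.erase i₀ := fun i hi =>
      Finset.mem_erase.2 ⟨by rintro rfl; simp [R, h₀] at hi, Finset.mem_univ i⟩
    simpa using Finset.card_le_card hR
  · funext p
    rw [listSum_apply, List.map_map, Finset.sum_map_toList]
    show w p = ∑ i ∈ R, if p.1 = i then w p else 0
    rw [Finset.sum_ite_eq]
    split_ifs with hp
    · rfl
    · simp only [R, Finset.mem_filter, Finset.mem_univ, true_and, not_exists, not_not] at hp
      exact hp p.2

end Reduction

theorem statement10_general (k n : ℕ) (hk : 0 < k) (lits : Fin k → Finset (Fin n × Bool)) :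
    (∃ v : Fin n → Bool, ∀ i : Fin k, ∃ ℓ ∈ lits i, v ℓ.1 = ℓ.2) ↔
      ¬ (URE.lang (E10 lits) ⊆ E10'lang lits) := by
  rw [lang_E10, Set.not_subset, Set.exists_range_iff]
  constructor
  · rintro ⟨v, hv⟩
    refine ⟨v, fun hw => ?_⟩
    obtain ⟨i, hi⟩ := exists_row_eq_zero_of_mem_E10'lang lits hk hw
    obtain ⟨ℓ, hℓ, hvℓ⟩ := hv i
    exact (assignmentWord_row_eq_zero_iff lits v i).1 hi ℓ hℓ hvℓ
  · rintro ⟨v, hv⟩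
    refine ⟨v, fun i => ?_⟩
    by_contra! hi
    exact hv <| mem_E10'lang_of_row_eq_zero lits (fun _ => usesVar_of_assignmentWord_ne_zero lits)
      ((assignmentWord_row_eq_zero_iff lits v i).2 hi)

/-- For a 3CNF formula `φ` in which each variable occurs at most once
in each clause: `φ` is satisfiable if and only if `L(E_φ)` is not contained in `L(E'_φ)`. -/
theorem statement10 (k n : ℕ) (hk : 0 < k) (lits : Fin k → Finset (Fin n × Bool))
    (h3 : ∀ i : Fin k, (lits i).card = 3)
    (honce : ∀ (i : Fin k) (j : Fin n) (s s' : Bool),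
        (j, s) ∈ lits i → (j, s') ∈ lits i → s = s') :
    (∃ v : Fin n → Bool, ∀ i : Fin k, ∃ ℓ ∈ lits i, v ℓ.1 = ℓ.2) ↔
      ¬ (URE.lang (E10 lits) ⊆ E10'lang lits) :=
  statement10_general k n hk lits
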